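/- Induction step for the successive approximation bounds (Lemma A.4, representative case j = 2): Let C_{2i} ∈ C(T) for i = 1, ..., 4, set C̄_{2i} := max_{(x,ξ)∈T} |C_{2i}(x,ξ)|, and let C̄ > 0 satisfy Σ_{i=1}^4 C̄_{2i} ≤ C̄. Let n ≥ 0 be an integer, M ≥ 0, and let F = (F¹, ..., F⁴) : T → ℝ⁴ be continuous with |Fⁱ(x,ξ)| ≤ M C̄ⁿ K_εⁿ xⁿ / n! for all i and all (x,ξ) ∈ T. Then for all (x,ξ) ∈ T, | Σ_{i=1}^4 ∫₀^{s₂^F(x,ξ)} C_{2i}(x₂(x,ξ,s), ξ₂(x,ξ,s)) Fⁱ(x₂(x,ξ,s), ξ₂(x,ξ,s)) ds | ≤ M C̄^{n+1} K_ε^{n+1} x^{n+1} / (n+1)!. -/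

import Mathlib

open MeasureTheory Set

/-- `φ(ε)(x) = ∫₀ˣ dz/ε(z)`. -/
noncomputable def phiInt (ε : ℝ → ℝ) (x : ℝ) : ℝ := ∫ z in (0:ℝ)..x, 1 / ε z

/-- `K_ε = max_{x∈[0,1]} max(1/ε₁(x), 1/ε₂(x))`. -/
noncomputable def Keps (ε₁ ε₂ : ℝ → ℝ) : ℝ :=
  ⨆ y : Icc (0:ℝ) 1, max (1 / ε₁ y) (1 / ε₂ y)

/-- The triangular domain T = {(x,ξ) : 0 ≤ ξ ≤ x ≤ 1}. -/
def Tri : Set (ℝ × ℝ) := {p | 0 ≤ p.2 ∧ p.2 ≤ p.1 ∧ p.1 ≤ 1}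

/-!
Along the second characteristic, `φ₁ (x₂ s) = φ₁ z + s` and `φ₂ (ξ₂ s) = φ₂ z - s`, so the curve
stays in `T` with `ξ ≤ ξ₂ s ≤ z ≤ x₂ s ≤ x`. Since `φ₁' = 1 / ε₁ ≤ K_ε`, the remaining parameter
`s₂^F - s = φ₁ x - φ₁ (x₂ s)` is at most `K_ε (x - x₂ s)`, i.e. `x₂ s` lies below the affine
function `x - (s₂^F - s) / K_ε` of `s`. Integrating its `n`-th power over `[0, s₂^F]` produces
`K_ε x^(n+1) / (n+1)`, which is where the extra factors `K_ε x / (n+1)` come from; the sum over `i`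
contributes at most `Σ C̄_{2i} ≤ C̄`.
-/

theorem IsCompact.le_ciSup_of_continuousOn {α β : Type*} [TopologicalSpace α]
    [ConditionallyCompleteLinearOrder β] [TopologicalSpace β] [OrderTopology β]
    {s : Set α} (hs : IsCompact s) {f : α → β} (hf : ContinuousOn f s) {p : α} (hp : p ∈ s) :
    f p ≤ ⨆ q : s, f q :=
  le_ciSup (f := fun q : s => f q) (by simpa only [image_eq_range] using hs.bddAbove_image hf)
    ⟨p, hp⟩

theorem isCompact_Tri : IsCompact Tri :=
  isCompact_Icc.of_isClosed_subset
    ((isClosed_le continuous_const continuous_snd).inter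
      ((isClosed_le continuous_snd continuous_fst).inter
        (isClosed_le continuous_fst continuous_const)))
    (fun _ ⟨h₀, h₁, h₂⟩ => ⟨⟨h₀.trans h₁, h₀⟩, ⟨h₂, h₁.trans h₂⟩⟩ :
      Tri ⊆ Icc ((0:ℝ), (0:ℝ)) (1, 1))

theorem rightInvOn_mem_Icc {φ ψ : ℝ → ℝ} (hφ : StrictMonoOn φ (Icc 0 1))
    (hψ : ∀ s ∈ Icc (0:ℝ) (φ 1), ψ s ∈ Icc (0:ℝ) 1 ∧ φ (ψ s) = s)
    {a b t : ℝ} (ha : a ∈ Icc (0:ℝ) 1) (hb : b ∈ Icc (0:ℝ) 1) (hφa : 0 ≤ φ a)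
    (ht : t ∈ Icc (φ a) (φ b)) : ψ t ∈ Icc a b ∧ φ (ψ t) = t := by
  have hφb : φ b ≤ φ 1 := hφ.monotoneOn hb ⟨zero_le_one, le_rfl⟩ hb.2
  obtain ⟨hψI, hψt⟩ := hψ t ⟨hφa.trans ht.1, ht.2.trans hφb⟩
  rw [← hψt] at ht
  exact ⟨⟨(hφ.le_iff_le ha hψI).1 ht.1, (hφ.le_iff_le hψI hb).1 ht.2⟩, hψt⟩

section phiInt

variable {ε : ℝ → ℝ}

theorem phiInt_zero : phiInt ε 0 = 0 := intervalIntegral.integral_same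

theorem intervalIntegrable_one_div (hε : ContinuousOn ε (Icc 0 1))
    (hpos : ∀ x ∈ Icc (0:ℝ) 1, 0 < ε x) {a b : ℝ} (ha : a ∈ Icc (0:ℝ) 1)
    (hb : b ∈ Icc (0:ℝ) 1) : IntervalIntegrable (fun z => 1 / ε z) volume a b :=
  ((continuousOn_const.div hε fun x hx => (hpos x hx).ne').mono
    (uIcc_subset_Icc ha hb)).intervalIntegrable

theorem phiInt_sub_phiInt (hε : ContinuousOn ε (Icc 0 1))
    (hpos : ∀ x ∈ Icc (0:ℝ) 1, 0 < ε x) {a b : ℝ} (ha : a ∈ Icc (0:ℝ) 1)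
    (hb : b ∈ Icc (0:ℝ) 1) : phiInt ε b - phiInt ε a = ∫ z in a..b, 1 / ε z :=
  intervalIntegral.integral_interval_sub_left
    (intervalIntegrable_one_div hε hpos ⟨le_rfl, zero_le_one⟩ hb)
    (intervalIntegrable_one_div hε hpos ⟨le_rfl, zero_le_one⟩ ha)

theorem phiInt_strictMonoOn (hε : ContinuousOn ε (Icc 0 1))
    (hpos : ∀ x ∈ Icc (0:ℝ) 1, 0 < ε x) : StrictMonoOn (phiInt ε) (Icc 0 1) := by
  intro a ha b hb hab
  rw [← sub_pos, phiInt_sub_phiInt hε hpos ha hb]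
  exact intervalIntegral.intervalIntegral_pos_of_pos_on
    (intervalIntegrable_one_div hε hpos ha hb)
    (fun x hx => one_div_pos.2 (hpos x ⟨ha.1.trans hx.1.le, hx.2.le.trans hb.2⟩)) hab

theorem phiInt_nonneg (hε : ContinuousOn ε (Icc 0 1))
    (hpos : ∀ x ∈ Icc (0:ℝ) 1, 0 < ε x) {x : ℝ} (hx : x ∈ Icc (0:ℝ) 1) :
    0 ≤ phiInt ε x :=
  phiInt_zero ▸ (phiInt_strictMonoOn hε hpos).monotoneOn ⟨le_rfl, zero_le_one⟩ hx hx.1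

theorem phiInt_sub_le_mul (hε : ContinuousOn ε (Icc 0 1))
    (hpos : ∀ x ∈ Icc (0:ℝ) 1, 0 < ε x) {K : ℝ} (hK : ∀ x ∈ Icc (0:ℝ) 1, 1 / ε x ≤ K)
    {a b : ℝ} (ha : a ∈ Icc (0:ℝ) 1) (hb : b ∈ Icc (0:ℝ) 1) (hab : a ≤ b) :
    phiInt ε b - phiInt ε a ≤ K * (b - a) := by
  rw [phiInt_sub_phiInt hε hpos ha hb]
  calc ∫ z in a..b, 1 / ε z ≤ ∫ _ in a..b, K :=
        intervalIntegral.integral_mono_on hab (intervalIntegrable_one_div hε hpos ha hb)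
          (intervalIntegrable_const (μ := volume))
          (fun x hx => hK x ⟨ha.1.trans hx.1, hx.2.trans hb.2⟩)
    _ = K * (b - a) := by rw [intervalIntegral.integral_const, smul_eq_mul, mul_comm]

end phiInt

theorem one_div_le_Keps {ε₁ ε₂ : ℝ → ℝ}
    (hε₁ : ContinuousOn ε₁ (Icc 0 1)) (hε₂ : ContinuousOn ε₂ (Icc 0 1))
    (hε₁pos : ∀ x ∈ Icc (0:ℝ) 1, 0 < ε₁ x) (hε₂pos : ∀ x ∈ Icc (0:ℝ) 1, 0 < ε₂ x)
    {x : ℝ} (hx : x ∈ Icc (0:ℝ) 1) : 1 / ε₁ x ≤ Keps ε₁ ε₂ :=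
  (le_max_left _ _).trans <| isCompact_Icc.le_ciSup_of_continuousOn
    (f := fun y => max (1 / ε₁ y) (1 / ε₂ y))
    ((continuousOn_const.div hε₁ fun y hy => (hε₁pos y hy).ne').sup
      (continuousOn_const.div hε₂ fun y hy => (hε₂pos y hy).ne')) hx

theorem integral_shifted_pow_le {K S x : ℝ} (n : ℕ) (hK : 0 < K) (hSx : S ≤ K * x) :
    ∫ s in (0:ℝ)..S, (x - (S - s) / K) ^ n ≤ K * x ^ (n + 1) / (n + 1) := by
  have hshift : 0 ≤ x - S / K := sub_nonneg.2 ((div_le_iff₀' hK).2 hSx)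
  have heval : ∫ s in (0:ℝ)..S, (x - (S - s) / K) ^ n
      = K * ((x ^ (n + 1) - (x - S / K) ^ (n + 1)) / (n + 1)) := by
    have := intervalIntegral.integral_comp_add_div (a := 0) (b := S) (fun v => v ^ n)
      hK.ne' (x - S / K)
    simp only [zero_div, add_zero, sub_add_cancel, integral_pow, smul_eq_mul] at this
    rw [← this]
    congr 1 with s
    ring
  rw [heval, mul_div_assoc]
  gcongr
  exact sub_le_self _ (pow_nonneg hshift _)

theorem abs_integral_le_of_abs_le_mul_shifted_pow {f : ℝ → ℝ} {c K S x : ℝ} (n : ℕ)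
    (hc : 0 ≤ c) (hK : 0 < K) (hS : 0 ≤ S) (hSx : S ≤ K * x)
    (hf : ∀ s ∈ Icc 0 S, |f s| ≤ c * (x - (S - s) / K) ^ n) :
    |∫ s in (0:ℝ)..S, f s| ≤ c * (K * x ^ (n + 1) / (n + 1)) := by
  have hg : Continuous fun s => c * (x - (S - s) / K) ^ n := by fun_prop
  calc |∫ s in (0:ℝ)..S, f s| = ‖∫ s in (0:ℝ)..S, f s‖ := (Real.norm_eq_abs _).symm
    _ ≤ ∫ s in (0:ℝ)..S, c * (x - (S - s) / K) ^ n :=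
        intervalIntegral.norm_integral_le_of_norm_le hS
          (ae_of_all _ fun s hs => (Real.norm_eq_abs _).trans_le (hf s (Ioc_subset_Icc_self hs)))
          (hg.intervalIntegrable _ _)
    _ = c * ∫ s in (0:ℝ)..S, (x - (S - s) / K) ^ n := intervalIntegral.integral_const_mul _ _
    _ ≤ c * (K * x ^ (n + 1) / (n + 1)) :=
        mul_le_mul_of_nonneg_left (integral_shifted_pow_le n hK hSx) hc

section characteristics

variable {ε₁ ε₂ ψ₁ ψ₂ ψ₃ : ℝ → ℝ}

theorem Keps_pos (hε₁ : ContinuousOn ε₁ (Icc 0 1)) (hε₂ : ContinuousOn ε₂ (Icc 0 1))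
    (hε₁pos : ∀ x ∈ Icc (0:ℝ) 1, 0 < ε₁ x) (hε₂pos : ∀ x ∈ Icc (0:ℝ) 1, 0 < ε₂ x) :
    0 < Keps ε₁ ε₂ :=
  (one_div_pos.2 (hε₁pos 0 ⟨le_rfl, zero_le_one⟩)).trans_le
    (one_div_le_Keps hε₁ hε₂ hε₁pos hε₂pos ⟨le_rfl, zero_le_one⟩)

theorem footpoint_mem_Icc (hε₁ : ContinuousOn ε₁ (Icc 0 1)) (hε₂ : ContinuousOn ε₂ (Icc 0 1))
    (hε₁pos : ∀ x ∈ Icc (0:ℝ) 1, 0 < ε₁ x) (hε₂pos : ∀ x ∈ Icc (0:ℝ) 1, 0 < ε₂ x)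
    (hψ₃' : ∀ s ∈ Icc (0:ℝ) (phiInt ε₁ 1 + phiInt ε₂ 1),
      ψ₃ s ∈ Icc (0:ℝ) 1 ∧ phiInt ε₁ (ψ₃ s) + phiInt ε₂ (ψ₃ s) = s)
    {x ξ : ℝ} (hξ : 0 ≤ ξ) (hξx : ξ ≤ x) (hx : x ≤ 1) :
    ψ₃ (phiInt ε₁ x + phiInt ε₂ ξ) ∈ Icc ξ x ∧
      phiInt ε₁ (ψ₃ (phiInt ε₁ x + phiInt ε₂ ξ)) + phiInt ε₂ (ψ₃ (phiInt ε₁ x + phiInt ε₂ ξ)) =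
        phiInt ε₁ x + phiInt ε₂ ξ := by
  have hξI : ξ ∈ Icc (0:ℝ) 1 := ⟨hξ, hξx.trans hx⟩
  have hxI : x ∈ Icc (0:ℝ) 1 := ⟨hξ.trans hξx, hx⟩
  have hmono₁ := (phiInt_strictMonoOn hε₁ hε₁pos).monotoneOn
  have hmono₂ := (phiInt_strictMonoOn hε₂ hε₂pos).monotoneOn
  exact rightInvOn_mem_Icc (φ := fun u => phiInt ε₁ u + phiInt ε₂ u)
    ((phiInt_strictMonoOn hε₁ hε₁pos).add_monotone hmono₂) hψ₃' hξI hxI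
    (add_nonneg (phiInt_nonneg hε₁ hε₁pos hξI) (phiInt_nonneg hε₂ hε₂pos hξI))
    ⟨add_le_add_left (hmono₁ hξI hxI hξx) _, add_le_add_right (hmono₂ hξI hxI hξx) _⟩

theorem characteristic_two_mem_Tri_and_le (hε₁ : ContinuousOn ε₁ (Icc 0 1))
    (hε₂ : ContinuousOn ε₂ (Icc 0 1))
    (hε₁pos : ∀ x ∈ Icc (0:ℝ) 1, 0 < ε₁ x) (hε₂pos : ∀ x ∈ Icc (0:ℝ) 1, 0 < ε₂ x)
    (hψ₁' : ∀ s ∈ Icc (0:ℝ) (phiInt ε₁ 1), ψ₁ s ∈ Icc (0:ℝ) 1 ∧ phiInt ε₁ (ψ₁ s) = s)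
    (hψ₂' : ∀ s ∈ Icc (0:ℝ) (phiInt ε₂ 1), ψ₂ s ∈ Icc (0:ℝ) 1 ∧ phiInt ε₂ (ψ₂ s) = s)
    {x ξ z s : ℝ} (hξ : 0 ≤ ξ) (hx : x ≤ 1) (hz : z ∈ Icc ξ x)
    (hzφ : phiInt ε₁ z + phiInt ε₂ z = phiInt ε₁ x + phiInt ε₂ ξ)
    (hs : s ∈ Icc 0 (phiInt ε₁ x - phiInt ε₁ z)) :
    (ψ₁ (phiInt ε₁ z + s), ψ₂ (phiInt ε₂ z - s)) ∈ Tri ∧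
      ψ₁ (phiInt ε₁ z + s) ≤ x - (phiInt ε₁ x - phiInt ε₁ z - s) / Keps ε₁ ε₂ := by
  have hξI : ξ ∈ Icc (0:ℝ) 1 := ⟨hξ, (hz.1.trans hz.2).trans hx⟩
  have hxI : x ∈ Icc (0:ℝ) 1 := ⟨hξ.trans (hz.1.trans hz.2), hx⟩
  have hzI : z ∈ Icc (0:ℝ) 1 := ⟨hξ.trans hz.1, hz.2.trans hx⟩
  obtain ⟨hx₂, hx₂φ⟩ := rightInvOn_mem_Icc (phiInt_strictMonoOn hε₁ hε₁pos) hψ₁' hzI hxI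
    (phiInt_nonneg hε₁ hε₁pos hzI) (t := phiInt ε₁ z + s)
    ⟨le_add_of_nonneg_right hs.1, by linarith [hs.2]⟩
  obtain ⟨hξ₂, -⟩ := rightInvOn_mem_Icc (phiInt_strictMonoOn hε₂ hε₂pos) hψ₂' hξI hzI
    (phiInt_nonneg hε₂ hε₂pos hξI) (t := phiInt ε₂ z - s)
    ⟨by linarith [hs.2], sub_le_self _ hs.1⟩
  refine ⟨⟨hξ.trans hξ₂.1, hξ₂.2.trans hx₂.1, hx₂.2.trans hx⟩, ?_⟩
  have hLip := phiInt_sub_le_mul hε₁ hε₁pos (fun u hu => one_div_le_Keps hε₁ hε₂ hε₁pos hε₂pos hu)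
    ⟨hzI.1.trans hx₂.1, hx₂.2.trans hx⟩ hxI hx₂.2
  rw [le_sub_comm, div_le_iff₀ (Keps_pos hε₁ hε₂ hε₁pos hε₂pos)]
  linarith

theorem abs_integral_along_characteristic_two_le (hε₁ : ContinuousOn ε₁ (Icc 0 1))
    (hε₂ : ContinuousOn ε₂ (Icc 0 1))
    (hε₁pos : ∀ x ∈ Icc (0:ℝ) 1, 0 < ε₁ x) (hε₂pos : ∀ x ∈ Icc (0:ℝ) 1, 0 < ε₂ x)
    (hψ₁' : ∀ s ∈ Icc (0:ℝ) (phiInt ε₁ 1), ψ₁ s ∈ Icc (0:ℝ) 1 ∧ phiInt ε₁ (ψ₁ s) = s)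
    (hψ₂' : ∀ s ∈ Icc (0:ℝ) (phiInt ε₂ 1), ψ₂ s ∈ Icc (0:ℝ) 1 ∧ phiInt ε₂ (ψ₂ s) = s)
    {G : ℝ → ℝ → ℝ} {c : ℝ} (n : ℕ) (hc : 0 ≤ c) (hG : ∀ p ∈ Tri, |G p.1 p.2| ≤ c * p.1 ^ n)
    {x ξ z : ℝ} (hξ : 0 ≤ ξ) (hx : x ≤ 1) (hz : z ∈ Icc ξ x)
    (hzφ : phiInt ε₁ z + phiInt ε₂ z = phiInt ε₁ x + phiInt ε₂ ξ) :
    |∫ s in (0:ℝ)..(phiInt ε₁ x - phiInt ε₁ z), G (ψ₁ (phiInt ε₁ z + s)) (ψ₂ (phiInt ε₂ z - s))|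
      ≤ c * (Keps ε₁ ε₂ * x ^ (n + 1) / (n + 1)) := by
  have hxI : x ∈ Icc (0:ℝ) 1 := ⟨hξ.trans (hz.1.trans hz.2), hx⟩
  have hzI : z ∈ Icc (0:ℝ) 1 := ⟨hξ.trans hz.1, hz.2.trans hx⟩
  have hK := Keps_pos hε₁ hε₂ hε₁pos hε₂pos
  have hSx : phiInt ε₁ x - phiInt ε₁ z ≤ Keps ε₁ ε₂ * x :=
    (phiInt_sub_le_mul hε₁ hε₁pos (fun u hu => one_div_le_Keps hε₁ hε₂ hε₁pos hε₂pos hu)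
      hzI hxI hz.2).trans (mul_le_mul_of_nonneg_left (sub_le_self _ hzI.1) hK.le)
  refine abs_integral_le_of_abs_le_mul_shifted_pow n hc hK
    (sub_nonneg.2 ((phiInt_strictMonoOn hε₁ hε₁pos).monotoneOn hzI hxI hz.2)) hSx
    fun s hs => ?_
  obtain ⟨hT, hx₂⟩ :=
    characteristic_two_mem_Tri_and_le hε₁ hε₂ hε₁pos hε₂pos hψ₁' hψ₂' hξ hx hz hzφ hs
  calc _ ≤ c * ψ₁ (phiInt ε₁ z + s) ^ n := hG _ hT
    _ ≤ _ := by gcongr; exact hT.1.trans hT.2.1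

end characteristics

theorem successive_approximation_induction_step_case2_general
    (ε₁ ε₂ : ℝ → ℝ)
    (hε₁ : ContinuousOn ε₁ (Icc 0 1)) (hε₂ : ContinuousOn ε₂ (Icc 0 1))
    (hε₁pos : ∀ x ∈ Icc (0:ℝ) 1, 0 < ε₁ x) (hε₂pos : ∀ x ∈ Icc (0:ℝ) 1, 0 < ε₂ x)
    (ψ₁ ψ₂ ψ₃ : ℝ → ℝ)
    (hψ₁' : ∀ s ∈ Icc (0:ℝ) (phiInt ε₁ 1), ψ₁ s ∈ Icc (0:ℝ) 1 ∧ phiInt ε₁ (ψ₁ s) = s)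
    (hψ₂' : ∀ s ∈ Icc (0:ℝ) (phiInt ε₂ 1), ψ₂ s ∈ Icc (0:ℝ) 1 ∧ phiInt ε₂ (ψ₂ s) = s)
    (hψ₃' : ∀ s ∈ Icc (0:ℝ) (phiInt ε₁ 1 + phiInt ε₂ 1),
      ψ₃ s ∈ Icc (0:ℝ) 1 ∧ phiInt ε₁ (ψ₃ s) + phiInt ε₂ (ψ₃ s) = s)
    (C₂ : Fin 4 → ℝ → ℝ → ℝ)
    (hC₂ : ∀ i, ContinuousOn (fun p : ℝ × ℝ => C₂ i p.1 p.2) Tri)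
    (Cbar : ℝ) (hCbar : 0 < Cbar)
    (hCbarle : (∑ i : Fin 4, ⨆ p : Tri, |C₂ i (p : ℝ × ℝ).1 (p : ℝ × ℝ).2|) ≤ Cbar)
    (n : ℕ) (M : ℝ) (hM : 0 ≤ M)
    (F : ℝ → ℝ → Fin 4 → ℝ)
    (hFbound : ∀ i, ∀ x ξ : ℝ, 0 ≤ ξ → ξ ≤ x → x ≤ 1 →
      |F x ξ i| ≤ M * Cbar ^ n * Keps ε₁ ε₂ ^ n * x ^ n / (Nat.factorial n)) :
    ∀ x ξ : ℝ, 0 ≤ ξ → ξ ≤ x → x ≤ 1 →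
      |∑ i : Fin 4, ∫ s in
          (0:ℝ)..(phiInt ε₁ x - phiInt ε₁ (ψ₃ (phiInt ε₁ x + phiInt ε₂ ξ))),
          C₂ i (ψ₁ (phiInt ε₁ (ψ₃ (phiInt ε₁ x + phiInt ε₂ ξ)) + s))
              (ψ₂ (phiInt ε₂ (ψ₃ (phiInt ε₁ x + phiInt ε₂ ξ)) - s)) *
            F (ψ₁ (phiInt ε₁ (ψ₃ (phiInt ε₁ x + phiInt ε₂ ξ)) + s))
              (ψ₂ (phiInt ε₂ (ψ₃ (phiInt ε₁ x + phiInt ε₂ ξ)) - s)) i| ≤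
        M * Cbar ^ (n + 1) * Keps ε₁ ε₂ ^ (n + 1) * x ^ (n + 1) /
          (Nat.factorial (n + 1)) := by
  intro x ξ hξ hξx hx
  set K := Keps ε₁ ε₂
  set Cmax : Fin 4 → ℝ := fun i => ⨆ p : Tri, |C₂ i (p : ℝ × ℝ).1 (p : ℝ × ℝ).2|
  set A := M * Cbar ^ n * K ^ n / n.factorial
  obtain ⟨hz, hzφ⟩ := footpoint_mem_Icc hε₁ hε₂ hε₁pos hε₂pos hψ₃' hξ hξx hx
  have hK : 0 < K := Keps_pos hε₁ hε₂ hε₁pos hε₂pos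
  have hA : 0 ≤ A := by positivity
  have hCmax : ∀ i, 0 ≤ Cmax i := fun i => Real.iSup_nonneg fun _ => abs_nonneg _
  have hterm : ∀ i p, p ∈ Tri → |C₂ i p.1 p.2 * F p.1 p.2 i| ≤ Cmax i * A * p.1 ^ n :=
    fun i p hp => by
      rw [abs_mul, mul_assoc]
      exact mul_le_mul (isCompact_Tri.le_ciSup_of_continuousOn (hC₂ i).abs hp)
        ((hFbound i p.1 p.2 hp.1 hp.2.1 hp.2.2).trans_eq (by ring)) (abs_nonneg _) (hCmax i)
  calc _ ≤ ∑ i : Fin 4, Cmax i * A * (K * x ^ (n + 1) / (n + 1)) :=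
        (Finset.abs_sum_le_sum_abs _ _).trans <| Finset.sum_le_sum fun i _ =>
          abs_integral_along_characteristic_two_le hε₁ hε₂ hε₁pos hε₂pos hψ₁' hψ₂'
            (G := fun a b => C₂ i a b * F a b i) n (mul_nonneg (hCmax i) hA) (hterm i) hξ hx hz hzφ
    _ = (∑ i : Fin 4, Cmax i) * (A * (K * x ^ (n + 1) / (n + 1))) := by
        rw [Finset.sum_mul]; simp only [mul_assoc]
    _ ≤ Cbar * (A * (K * x ^ (n + 1) / (n + 1))) :=
        mul_le_mul_of_nonneg_right hCbarle
          (mul_nonneg hA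
            (div_nonneg (mul_nonneg hK.le (pow_nonneg (hξ.trans hξx) _)) (by positivity)))
    _ = M * Cbar ^ (n + 1) * K ^ (n + 1) * x ^ (n + 1) / (n + 1).factorial := by
        simp only [A, Nat.factorial_succ]; push_cast; field_simp; ring

/-- Induction step for the successive approximation bounds (Lemma A.4,
representative case j = 2).  `ψ₁, ψ₂, ψ₃` are the inverses of
`φ₁, φ₂, φ₃ = φ₁ + φ₂`; with `z = ψ₃(φ₁ x + φ₂ ξ)`, the second characteristic is
`x₂(s) = ψ₁(φ₁ z + s)`, `ξ₂(s) = ψ₂(φ₂ z − s)`, `s₂^F = φ₁ x − φ₁ z`. -/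
theorem successive_approximation_induction_step_case2
    (ε₁ ε₂ : ℝ → ℝ)
    (hε₁ : ContinuousOn ε₁ (Icc 0 1)) (hε₂ : ContinuousOn ε₂ (Icc 0 1))
    (hε₁pos : ∀ x ∈ Icc (0:ℝ) 1, 0 < ε₁ x) (hε₂pos : ∀ x ∈ Icc (0:ℝ) 1, 0 < ε₂ x)
    (ψ₁ ψ₂ ψ₃ : ℝ → ℝ)
    (hψ₁ : ∀ x ∈ Icc (0:ℝ) 1, ψ₁ (phiInt ε₁ x) = x)
    (hψ₁' : ∀ s ∈ Icc (0:ℝ) (phiInt ε₁ 1), ψ₁ s ∈ Icc (0:ℝ) 1 ∧ phiInt ε₁ (ψ₁ s) = s)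
    (hψ₂ : ∀ x ∈ Icc (0:ℝ) 1, ψ₂ (phiInt ε₂ x) = x)
    (hψ₂' : ∀ s ∈ Icc (0:ℝ) (phiInt ε₂ 1), ψ₂ s ∈ Icc (0:ℝ) 1 ∧ phiInt ε₂ (ψ₂ s) = s)
    (hψ₃ : ∀ x ∈ Icc (0:ℝ) 1, ψ₃ (phiInt ε₁ x + phiInt ε₂ x) = x)
    (hψ₃' : ∀ s ∈ Icc (0:ℝ) (phiInt ε₁ 1 + phiInt ε₂ 1),
      ψ₃ s ∈ Icc (0:ℝ) 1 ∧ phiInt ε₁ (ψ₃ s) + phiInt ε₂ (ψ₃ s) = s)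
    (C₂ : Fin 4 → ℝ → ℝ → ℝ)
    (hC₂ : ∀ i, ContinuousOn (fun p : ℝ × ℝ => C₂ i p.1 p.2) Tri)
    (Cbar : ℝ) (hCbar : 0 < Cbar)
    (hCbarle : (∑ i : Fin 4, ⨆ p : Tri, |C₂ i (p : ℝ × ℝ).1 (p : ℝ × ℝ).2|) ≤ Cbar)
    (n : ℕ) (M : ℝ) (hM : 0 ≤ M)
    (F : ℝ → ℝ → Fin 4 → ℝ)
    (hFcont : ∀ i, ContinuousOn (fun p : ℝ × ℝ => F p.1 p.2 i) Tri)
    (hFbound : ∀ i, ∀ x ξ : ℝ, 0 ≤ ξ → ξ ≤ x → x ≤ 1 →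
      |F x ξ i| ≤ M * Cbar ^ n * Keps ε₁ ε₂ ^ n * x ^ n / (Nat.factorial n)) :
    ∀ x ξ : ℝ, 0 ≤ ξ → ξ ≤ x → x ≤ 1 →
      |∑ i : Fin 4, ∫ s in
          (0:ℝ)..(phiInt ε₁ x - phiInt ε₁ (ψ₃ (phiInt ε₁ x + phiInt ε₂ ξ))),
          C₂ i (ψ₁ (phiInt ε₁ (ψ₃ (phiInt ε₁ x + phiInt ε₂ ξ)) + s))
              (ψ₂ (phiInt ε₂ (ψ₃ (phiInt ε₁ x + phiInt ε₂ ξ)) - s)) *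
            F (ψ₁ (phiInt ε₁ (ψ₃ (phiInt ε₁ x + phiInt ε₂ ξ)) + s))
              (ψ₂ (phiInt ε₂ (ψ₃ (phiInt ε₁ x + phiInt ε₂ ξ)) - s)) i| ≤
        M * Cbar ^ (n + 1) * Keps ε₁ ε₂ ^ (n + 1) * x ^ (n + 1) /
          (Nat.factorial (n + 1)) :=
  successive_approximation_induction_step_case2_general ε₁ ε₂ hε₁ hε₂ hε₁pos hε₂pos ψ₁ ψ₂ ψ₃ hψ₁'
    hψ₂' hψ₃' C₂ hC₂ Cbar hCbar hCbarle n M hM F hFbound
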